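/- arXiv:math/0309319 — 3 statements merged into one kernel-verified Lean document; each statement's English description precedes it below -/
import Mathlib

section
/- The map θ : {(u,v) ∈ ℂ² : |v| = ε, u ≠ 0} → S¹ given by θ(u,v) = u^d / |u|^d (for d ≥ 1 and ε > 0) is a smooth locally trivial fibration, and each fiber θ⁻¹(e^{iα}) is a disjoint union of d connected components, each diffeomorphic to an annulus (0,∞) × S¹. -/
open Complex Set Metric

noncomputable section ThetaAux

/-- canonical d-th root on the unit circle -/
private def rt (d : ℕ) (z : ℂ) : ℂ := Complex.exp ((z.arg / d : ℝ) * Complex.I)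

private lemma abs_rt (d : ℕ) (z : ℂ) : ‖(rt d z)‖ = 1 :=
  Complex.norm_exp_ofReal_mul_I _

private lemma rt_pow {d : ℕ} (hd : d ≠ 0) {z : ℂ} (hz : ‖z‖ = 1) : rt d z ^ d = z := by
  rw [rt, ← Complex.exp_nat_mul]
  have hd' : (d : ℂ) ≠ 0 := Nat.cast_ne_zero.mpr hd
  have : (d : ℂ) * (((z.arg / d : ℝ) : ℂ) * Complex.I) = (z.arg : ℂ) * Complex.I := by
    push_cast; field_simp
  rw [this]
  conv_rhs => rw [← Complex.norm_mul_exp_arg_mul_I z, hz]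
  simp

private lemma absOne {d : ℕ} (hd : d ≠ 0) {ξ : ℂ} (h : ξ ^ d = 1) : ‖ξ‖ = 1 := by
  have h1 : ‖ξ‖ ^ d = 1 ^ d := by rw [← norm_pow, h, norm_one, one_pow]
  exact (pow_left_strictMonoOn₀ hd).injOn (Set.mem_Ici.mpr (norm_nonneg _))
    (Set.mem_Ici.mpr zero_le_one) h1

private lemma isConnected_of_homeo {X : Type*} [TopologicalSpace X] {A : Set X}
    (h : Nonempty (A ≃ₜ (Set.Ioi (0:ℝ)) × (Metric.sphere (0:ℂ) 1))) : IsConnected A := by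
  obtain ⟨e⟩ := h
  have h1 : ConnectedSpace (Set.Ioi (0:ℝ)) := Subtype.connectedSpace isConnected_Ioi
  have h2 : ConnectedSpace (Metric.sphere (0:ℂ) 1) :=
    Subtype.connectedSpace (isConnected_sphere
      (by rw [Complex.rank_real_complex]; norm_num) 0 zero_le_one)
  exact isConnected_iff_connectedSpace.mpr (e.symm.surjective.connectedSpace e.symm.continuous)

private lemma rayHomeo {ε : ℝ} (hε : 0 < ε) {c : ℂ} (hc : ‖c‖ = 1) :
    Nonempty (({x : {p : ℂ × ℂ // ‖p.2‖ = ε ∧ p.1 ≠ 0} |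
        x.1.1 = (‖x.1.1‖ : ℂ) * c} : Set _) ≃ₜ
      (Set.Ioi (0:ℝ)) × (Metric.sphere (0:ℂ) 1)) := by
  have hc0 : c ≠ 0 := by intro h; rw [h] at hc; simp at hc
  have hε0 : (ε : ℂ) ≠ 0 := by exact_mod_cast hε.ne'
  have habs : ∀ (r : ℝ), 0 < r → ‖((r : ℂ) * c)‖ = r := by
    intro r hr
    rw [norm_mul, hc, Complex.norm_real, Real.norm_eq_abs, abs_of_pos hr, mul_one]
  refine ⟨⟨⟨fun x => (⟨‖x.1.1.1‖, norm_pos_iff.mpr x.1.2.2⟩,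
      ⟨x.1.1.2 / ε, by
        rw [mem_sphere_zero_iff_norm, norm_div,
          x.1.2.1, Complex.norm_real, Real.norm_eq_abs, abs_of_pos hε, div_self hε.ne']⟩),
    fun q => ⟨⟨⟨(q.1.1 : ℂ) * c, (ε : ℂ) * q.2.1⟩, by
        constructor
        · rw [norm_mul, Complex.norm_real, Real.norm_eq_abs, abs_of_pos hε]
          have := mem_sphere_zero_iff_norm.mp q.2.2
          rw [this, mul_one]
        · exact mul_ne_zero (by exact_mod_cast (q.1.2 : (0:ℝ) < q.1.1).ne') hc0⟩, by
        show ((q.1.1 : ℂ) * c) = _ * c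
        rw [habs _ q.1.2]⟩,
    ?_, ?_⟩, ?_, ?_⟩⟩
  · intro x
    apply Subtype.ext; apply Subtype.ext
    apply Prod.ext
    · exact x.2.symm
    · show (ε : ℂ) * (x.1.1.2 / ε) = x.1.1.2
      rw [mul_comm, div_mul_cancel₀ _ hε0]
  · intro q
    apply Prod.ext
    · apply Subtype.ext
      exact habs _ q.1.2
    · apply Subtype.ext
      show ((ε : ℂ) * q.2.1) / ε = q.2.1
      rw [mul_comm, mul_div_cancel_right₀ _ hε0]
  · have hval : Continuous fun x : ({x : {p : ℂ × ℂ // ‖p.2‖ = ε ∧ p.1 ≠ 0} |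
        x.1.1 = (‖x.1.1‖ : ℂ) * c} : Set _) => (x.1.1 : ℂ × ℂ) :=
      continuous_subtype_val.comp continuous_subtype_val
    exact ((continuous_norm.comp (continuous_fst.comp hval)).subtype_mk _).prodMk
      (((continuous_snd.comp hval).div_const _).subtype_mk _)
  · exact ((((Complex.continuous_ofReal.comp (continuous_subtype_val.comp
      continuous_fst)).mul continuous_const).prodMk
      (continuous_const.mul (continuous_subtype_val.comp continuous_snd))).subtype_mk _).subtype_mk _

end ThetaAux

/-- A map `p : E → B` is a locally trivial fibration over a subset `S ⊆ B`. -/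
def IsLocTrivFibOn {E B : Type*} [TopologicalSpace E] [TopologicalSpace B]
    (p : E → B) (S : Set B) : Prop :=
  ∀ b ∈ S, ∃ U : Set B, IsOpen U ∧ b ∈ U ∧ ∃ (F : Type) (_ : TopologicalSpace F)
    (h : (p ⁻¹' (U ∩ S)) ≃ₜ (U ∩ S : Set B) × F),
      ∀ x : p ⁻¹' (U ∩ S), ((h x).1 : B) = p x.1

/-- The map `θ(u,v) = u^d/|u|^d` on `{(u,v) : |v| = ε, u ≠ 0}` is a locally
trivial fibration over the unit circle, and each fiber is a disjoint union of
`d` connected components, each homeomorphic to the annulus `(0,∞) × S¹`. -/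
theorem theta_fibration_annuli
    (d : ℕ) (hd : 1 ≤ d) (ε : ℝ) (hε : 0 < ε)
    (θ : {p : ℂ × ℂ // ‖p.2‖ = ε ∧ p.1 ≠ 0} → ℂ)
    (hθ : ∀ x, θ x = x.1.1 ^ d / (‖x.1.1‖ : ℂ) ^ d) :
    IsLocTrivFibOn θ (Metric.sphere (0 : ℂ) 1) ∧
      ∀ z ∈ Metric.sphere (0 : ℂ) 1,
        ∃ A : Fin d → Set {p : ℂ × ℂ // ‖p.2‖ = ε ∧ p.1 ≠ 0},
          (⋃ i, A i) = θ ⁻¹' {z} ∧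
          Pairwise (Function.onFun Disjoint A) ∧
          (∀ i, IsConnected (A i)) ∧
          (∀ i, Nonempty
            ((A i) ≃ₜ (Set.Ioi (0 : ℝ)) × (Metric.sphere (0 : ℂ) 1))) := by
  have hd0 : d ≠ 0 := by omega
  haveI : NeZero d := ⟨hd0⟩
  have hu : ∀ x : {p : ℂ × ℂ // ‖p.2‖ = ε ∧ p.1 ≠ 0}, (‖x.1.1‖ : ℂ) ≠ 0 := fun x => by
    exact_mod_cast (norm_pos_iff.mpr x.2.2).ne'
  have hθ' : ∀ x : {p : ℂ × ℂ // ‖p.2‖ = ε ∧ p.1 ≠ 0}, θ x = (x.1.1 / (‖x.1.1‖ : ℂ)) ^ d := fun x => by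
    rw [hθ, div_pow]
  have hc1 : ∀ x : {p : ℂ × ℂ // ‖p.2‖ = ε ∧ p.1 ≠ 0}, ‖(x.1.1 / (‖x.1.1‖ : ℂ))‖ = 1 := fun x => by
    rw [norm_div, Complex.norm_real, Real.norm_eq_abs, _root_.abs_of_nonneg (norm_nonneg _), div_self (norm_pos_iff.mpr x.2.2).ne']
  have hθabs : ∀ x : {p : ℂ × ℂ // ‖p.2‖ = ε ∧ p.1 ≠ 0}, ‖(θ x)‖ = 1 := fun x => by
    rw [hθ' x, norm_pow, hc1 x, one_pow]
  have hθ0 : ∀ x : {p : ℂ × ℂ // ‖p.2‖ = ε ∧ p.1 ≠ 0}, θ x ≠ 0 := fun x => by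
    intro h; have := hθabs x; rw [h] at this; simp at this
  have hθc : Continuous θ := by
    have : θ = fun x : {p : ℂ × ℂ // ‖p.2‖ = ε ∧ p.1 ≠ 0} => x.1.1 ^ d / ((‖x.1.1‖ : ℂ)) ^ d := funext hθ
    rw [this]
    exact ((continuous_fst.comp continuous_subtype_val).pow d).div
      ((Complex.continuous_ofReal.comp (continuous_norm.comp
        (continuous_fst.comp continuous_subtype_val))).pow d)
      (fun x => pow_ne_zero _ (hu x))
  constructor
  · -- local triviality
    intro b hb
    have hb1 : ‖b‖ = 1 := by
      rwa [mem_sphere_zero_iff_norm] at hb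
    set c := rt d b with hcdef
    have hcpow : c ^ d = b := rt_pow hd0 hb1
    have hcabs : ‖c‖ = 1 := abs_rt d b
    have hbconj : b * (starRingEnd ℂ) b = 1 := by
      rw [Complex.mul_conj]
      norm_cast
      rw [Complex.normSq_eq_norm_sq, hb1, one_pow]
    set U : Set ℂ := (fun z => z * (starRingEnd ℂ) b) ⁻¹' Complex.slitPlane with hUdef
    have hUopen : IsOpen U :=
      Complex.isOpen_slitPlane.preimage (continuous_id.mul continuous_const)
    have hbU : b ∈ U := by
      show b * (starRingEnd ℂ) b ∈ Complex.slitPlane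
      rw [hbconj]; exact Complex.one_mem_slitPlane
    set ρ : ℂ → ℂ := fun z => c * (z * (starRingEnd ℂ) b) ^ ((d : ℂ)⁻¹) with hρdef
    have hρpow : ∀ z ∈ U, ρ z ^ d = z := by
      intro z hz
      show (c * _) ^ d = z
      rw [mul_pow, Complex.cpow_nat_inv_pow _ hd0, hcpow]
      calc b * (z * (starRingEnd ℂ) b) = z * (b * (starRingEnd ℂ) b) := by ring
        _ = z := by rw [hbconj, mul_one]
    have hρabs : ∀ z : ℂ, ‖z‖ = 1 → ‖(ρ z)‖ = 1 := by
      intro z hz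
      show ‖(c * _)‖ = 1
      rw [norm_mul, hcabs, one_mul]
      have : ((d : ℂ)⁻¹) = (((d : ℝ)⁻¹ : ℝ) : ℂ) := by push_cast; rfl
      rw [this, Complex.norm_cpow_real, norm_mul, hz, Complex.norm_conj, hb1, one_mul,
        Real.one_rpow]
    have hρ0 : ∀ z : ℂ, ‖z‖ = 1 → ρ z ≠ 0 := by
      intro z hz h
      have := hρabs z hz; rw [h] at this; simp at this
    have hρcont : ContinuousOn ρ U := by
      intro z hz
      refine ContinuousAt.continuousWithinAt ?_
      have h2 : ContinuousAt (fun z : ℂ => (z * (starRingEnd ℂ) b) ^ ((d : ℂ)⁻¹)) z :=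
        ContinuousAt.comp (continuousAt_cpow_const (Set.mem_preimage.mp hz))
          ((continuous_id.mul continuous_const).continuousAt)
      exact continuousAt_const.mul h2
    -- the fiber type
    refine ⟨U, hUopen, hbU,
      ↥(Set.Ioi (0:ℝ)) × ({ξ : ℂ // ξ ^ d = 1} × ↥(Metric.sphere (0:ℂ) ε)), inferInstance, ?_⟩
    have hmemS : ∀ x : {p : ℂ × ℂ // ‖p.2‖ = ε ∧ p.1 ≠ 0}, θ x ∈ Metric.sphere (0:ℂ) 1 := fun x => by
      rw [mem_sphere_zero_iff_norm]; exact hθabs x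
    -- key computation for the inverse map
    have hcomp : ∀ (z : ℂ), z ∈ U → ‖z‖ = 1 → ∀ (r : ℝ), 0 < r →
        ∀ ξ : ℂ, ξ ^ d = 1 → ∀ x : {p : ℂ × ℂ // ‖p.2‖ = ε ∧ p.1 ≠ 0}, x.1.1 = (r : ℂ) * (ξ * ρ z) →
        ‖x.1.1‖ = r ∧ x.1.1 / (‖x.1.1‖ : ℂ) = ξ * ρ z ∧ θ x = z := by
      intro z hzU hz1 r hr ξ hξ x hx
      have hξ1 : ‖ξ‖ = 1 := absOne hd0 hξ
      have habsx : ‖x.1.1‖ = r := by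
        rw [hx, norm_mul, norm_mul, Complex.norm_real, Real.norm_eq_abs, abs_of_pos hr, hξ1, hρabs z hz1]
        ring
      refine ⟨habsx, ?_, ?_⟩
      · rw [habsx, hx, mul_div_cancel_left₀]
        exact_mod_cast hr.ne'
      · rw [hθ' x, habsx, hx, mul_div_cancel_left₀ _ (by exact_mod_cast hr.ne' : (r:ℂ) ≠ 0),
          mul_pow, hξ, one_mul, hρpow z hzU]
    have hzS : ∀ (z : ↥(U ∩ Metric.sphere (0:ℂ) 1)), ‖(z : ℂ)‖ = 1 := fun z => by
      have := z.2.2; rwa [mem_sphere_zero_iff_norm] at this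
    have hsε : ∀ (s : ↥(Metric.sphere (0:ℂ) ε)), ‖(s : ℂ)‖ = ε := fun s => by
      have := s.2; rwa [mem_sphere_zero_iff_norm] at this
    have hE : ∀ (z : ℂ), z ∈ U → ‖z‖ = 1 → ∀ (r : ℝ), 0 < r →
        ∀ (ξ : ℂ), ξ ^ d = 1 → ∀ (s : ℂ), ‖s‖ = ε →
        ‖(((r : ℂ) * (ξ * ρ z), s) : ℂ × ℂ).2‖ = ε ∧
          (((r : ℂ) * (ξ * ρ z), s) : ℂ × ℂ).1 ≠ 0 := by
      intro z hzU hz1 r hr ξ hξ s hs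
      refine ⟨hs, mul_ne_zero (by exact_mod_cast hr.ne') (mul_ne_zero ?_ (hρ0 _ hz1))⟩
      intro h; have := absOne hd0 hξ; rw [h] at this; simp at this
    have hmem : ∀ (z : ℂ) (hzU : z ∈ U) (hz1 : ‖z‖ = 1) (r : ℝ) (hr : 0 < r)
        (ξ : ℂ) (hξ : ξ ^ d = 1) (s : ℂ) (hs : ‖s‖ = ε),
        θ ⟨((r : ℂ) * (ξ * ρ z), s), hE z hzU hz1 r hr ξ hξ s hs⟩ ∈
          U ∩ Metric.sphere (0:ℂ) 1 := by
      intro z hzU hz1 r hr ξ hξ s hs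
      have h := hcomp z hzU hz1 r hr ξ hξ ⟨((r : ℂ) * (ξ * ρ z), s),
        hE z hzU hz1 r hr ξ hξ s hs⟩ rfl
      rw [h.2.2]
      exact ⟨hzU, by rw [mem_sphere_zero_iff_norm, hz1]⟩
    refine ⟨⟨⟨fun x => (⟨θ x.1, x.2⟩,
        ⟨‖x.1.1.1‖, norm_pos_iff.mpr x.1.2.2⟩,
        ⟨(x.1.1.1 / (‖x.1.1.1‖ : ℂ)) * (ρ (θ x.1))⁻¹, by
          have hz1 : ‖(θ x.1)‖ = 1 := hθabs x.1
          rw [mul_pow, ← hθ' x.1, inv_pow, hρpow _ x.2.1,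
            mul_inv_cancel₀ (hθ0 x.1)]⟩,
        ⟨x.1.1.2, by rw [mem_sphere_zero_iff_norm]; exact x.1.2.1⟩),
      fun q => ⟨⟨((q.2.1.1 : ℂ) * (q.2.2.1.1 * ρ q.1.1), q.2.2.2.1),
          hE q.1.1 q.1.2.1 (hzS q.1) q.2.1.1 q.2.1.2 q.2.2.1.1 q.2.2.1.2 q.2.2.2.1
            (hsε q.2.2.2)⟩,
        hmem q.1.1 q.1.2.1 (hzS q.1) q.2.1.1 q.2.1.2 q.2.2.1.1 q.2.2.1.2 q.2.2.2.1
          (hsε q.2.2.2)⟩,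
      ?_, ?_⟩, ?_, ?_⟩, fun x => rfl⟩
    · -- left inverse
      intro x
      apply Subtype.ext; apply Subtype.ext
      apply Prod.ext
      · show ((‖x.1.1.1‖ : ℝ) : ℂ) *
          ((x.1.1.1 / (‖x.1.1.1‖ : ℂ)) * (ρ (θ x.1))⁻¹ * ρ (θ x.1)) = x.1.1.1
        have hz1 : ‖(θ x.1)‖ = 1 := hθabs x.1
        rw [inv_mul_cancel_right₀ (hρ0 _ hz1), mul_comm, div_mul_cancel₀ _ (hu x.1)]
      · rfl
    · -- right inverse
      intro q
      have hz1 : ‖q.1.1‖ = 1 := hzS q.1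
      have h := hcomp q.1.1 q.1.2.1 hz1 q.2.1.1 q.2.1.2 q.2.2.1.1 q.2.2.1.2
        ⟨((q.2.1.1 : ℂ) * (q.2.2.1.1 * ρ q.1.1), q.2.2.2.1),
          hE q.1.1 q.1.2.1 hz1 q.2.1.1 q.2.1.2 q.2.2.1.1 q.2.2.1.2 q.2.2.2.1
            (hsε q.2.2.2)⟩ rfl
      refine Prod.ext (Subtype.ext ?_) (Prod.ext (Subtype.ext ?_)
        (Prod.ext (Subtype.ext ?_) (Subtype.ext ?_)))
      · exact h.2.2
      · exact h.1
      · show _ / _ * (ρ (θ _))⁻¹ = _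
        rw [h.2.1, h.2.2, mul_inv_cancel_right₀ (hρ0 _ hz1)]
      · rfl
    · -- continuity of toFun
      have hval : Continuous fun x : (θ ⁻¹' (U ∩ Metric.sphere (0:ℂ) 1)) => (x.1.1 : ℂ × ℂ) :=
        continuous_subtype_val.comp continuous_subtype_val
      have huc : Continuous fun x : (θ ⁻¹' (U ∩ Metric.sphere (0:ℂ) 1)) => x.1.1.1 :=
        continuous_fst.comp hval
      have hρθ : Continuous fun x : (θ ⁻¹' (U ∩ Metric.sphere (0:ℂ) 1)) => ρ (θ x.1) :=
        hρcont.comp_continuous (hθc.comp continuous_subtype_val) (fun x => x.2.1)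
      refine ((hθc.comp continuous_subtype_val).subtype_mk _).prodMk
        (((continuous_norm.comp huc).subtype_mk _).prodMk
          (((((huc.div (Complex.continuous_ofReal.comp
            (continuous_norm.comp huc)) (fun x => hu x.1)).mul
            (hρθ.inv₀ (fun x => hρ0 _ (hθabs x.1)))).subtype_mk _)).prodMk
          (((continuous_snd.comp hval).subtype_mk _))))
    · -- continuity of invFun
      have hz : Continuous fun q : (↥(U ∩ Metric.sphere (0:ℂ) 1) ×
          ((Set.Ioi (0:ℝ)) × ({ξ : ℂ // ξ ^ d = 1} × (Metric.sphere (0:ℂ) ε)))) =>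
          (q.1.1 : ℂ) := continuous_subtype_val.comp continuous_fst
      have hρz : Continuous fun q : (↥(U ∩ Metric.sphere (0:ℂ) 1) ×
          ((Set.Ioi (0:ℝ)) × ({ξ : ℂ // ξ ^ d = 1} × (Metric.sphere (0:ℂ) ε)))) =>
          ρ q.1.1 := hρcont.comp_continuous hz (fun q => q.1.2.1)
      exact ((((Complex.continuous_ofReal.comp (continuous_subtype_val.comp
        (continuous_fst.comp continuous_snd))).mul
        (((continuous_subtype_val.comp (continuous_fst.comp
          (continuous_snd.comp continuous_snd)))).mul hρz)).prodMk
        (continuous_subtype_val.comp (continuous_snd.comp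
          (continuous_snd.comp continuous_snd)))).subtype_mk _).subtype_mk _
  · -- fibers
    intro z hz
    have hz1 : ‖z‖ = 1 := by
      rwa [mem_sphere_zero_iff_norm] at hz
    have hz0 : z ≠ 0 := by intro h; rw [h] at hz1; simp at hz1
    set w := rt d z with hwdef
    have hwpow : w ^ d = z := rt_pow hd0 hz1
    have hwabs : ‖w‖ = 1 := abs_rt d z
    have hw0 : w ≠ 0 := by intro h; rw [h] at hwabs; simp at hwabs
    set ζ : ℂ := Complex.exp (2 * Real.pi * Complex.I / d) with hζdef
    have hζ : IsPrimitiveRoot ζ d := Complex.isPrimitiveRoot_exp d hd0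
    have hwζabs : ∀ i : Fin d, ‖(w * ζ ^ (i : ℕ))‖ = 1 := by
      intro i
      rw [norm_mul, hwabs, norm_pow, absOne hd0 hζ.pow_eq_one, one_pow, mul_one]
    refine ⟨fun i => {x : {p : ℂ × ℂ // ‖p.2‖ = ε ∧ p.1 ≠ 0} | x.1.1 = (‖x.1.1‖ : ℂ) * (w * ζ ^ (i : ℕ))},
      ?_, ?_, ?_, ?_⟩
    · ext x
      simp only [mem_iUnion, mem_preimage, mem_singleton_iff, mem_setOf_eq]
      constructor
      · rintro ⟨i, hx⟩
        rw [hθ' x, hx, norm_mul, Complex.norm_real, Real.norm_eq_abs,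
          _root_.abs_of_nonneg (norm_nonneg _), hwζabs i, mul_one,
          mul_div_cancel_left₀ _ (hu x), mul_pow, hwpow, ← pow_mul,
          mul_comm (i : ℕ) d, pow_mul, hζ.pow_eq_one, one_pow, mul_one]
      · intro hx
        have hξ : ((x.1.1 / (‖x.1.1‖ : ℂ)) * w⁻¹) ^ d = 1 := by
          rw [mul_pow, ← hθ' x, hx, inv_pow, hwpow, mul_inv_cancel₀ hz0]
        obtain ⟨i, hi, hζi⟩ := hζ.eq_pow_of_pow_eq_one hξ
        refine ⟨⟨i, hi⟩, ?_⟩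
        have : x.1.1 / (‖x.1.1‖ : ℂ) = w * ζ ^ i := by
          rw [hζi, mul_comm w, mul_assoc, inv_mul_cancel₀ hw0, mul_one]
        rw [← this, mul_comm]
        exact (div_mul_cancel₀ _ (hu x)).symm
    · intro i j hij
      rw [Function.onFun]
      refine Set.disjoint_left.mpr fun x hxi hxj => hij ?_
      have h1 : (‖x.1.1‖ : ℂ) * (w * ζ ^ (i : ℕ)) =
          (‖x.1.1‖ : ℂ) * (w * ζ ^ (j : ℕ)) := by
        rw [← hxi, ← hxj]
      have h2 : ζ ^ (i : ℕ) = ζ ^ (j : ℕ) :=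
        mul_left_cancel₀ hw0 (mul_left_cancel₀ (hu x) h1)
      exact Fin.ext (hζ.pow_inj i.2 j.2 h2)
    · intro i
      exact isConnected_of_homeo (rayHomeo hε (hwζabs i))
    · intro i
      exact rayHomeo hε (hwζabs i)
end

section
/- For p, q positive integers and ε, δ > 0, the fiber of θ(u,v) = u^p v^q / |u^p v^q| restricted to {(u,v) : |v| = ε, 0 < |u| ≤ δ} over any point of S¹ has exactly gcd(p,q) connected components. -/
open Complex Set

lemma card_roots_aux (d : ℕ) (hd : 0 < d) (z : ℂ) (hz : z ≠ 0) :
    Nat.card {ζ : ℂ // ζ ^ d = z} = d := by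
  set c : ℂ := Complex.exp (Complex.log z / d) with hc
  have hcd : c ^ d = z := by
    rw [hc, ← Complex.exp_nat_mul, mul_div_cancel₀ _ (by exact_mod_cast hd.ne' : (d:ℂ) ≠ 0),
      Complex.exp_log hz]
  have hc0 : c ≠ 0 := Complex.exp_ne_zero _
  have e1 : {ζ : ℂ // ζ ^ d = z} ≃ {w : ℂ // w ^ d = 1} :=
    { toFun := fun ζ => ⟨ζ.1 / c, by
        rw [div_pow, ζ.2, hcd, div_self hz]⟩
      invFun := fun w => ⟨w.1 * c, by rw [mul_pow, w.2, one_mul, hcd]⟩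
      left_inv := fun ζ => by simp [div_mul_cancel₀ _ hc0]
      right_inv := fun w => by simp [mul_div_cancel_right₀ _ hc0] }
  have e2 : {w : ℂ // w ^ d = 1} ≃ (Polynomial.nthRootsFinset d (1 : ℂ) : Finset ℂ) :=
    Equiv.subtypeEquivRight (fun w => (Polynomial.mem_nthRootsFinset hd (1 : ℂ)).symm)
  rw [Nat.card_congr (e1.trans e2), Nat.card_eq_finsetCard,
    (Complex.isPrimitiveRoot_exp d hd.ne').card_nthRootsFinset]

lemma card_components_aux {X : Type*} [TopologicalSpace X] (f : X → ℂ) (R : Set ℂ)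
    (hR : R.Finite) (hf : Continuous f) (hmem : ∀ x, f x ∈ R)
    (hne : ∀ ζ ∈ R, (f ⁻¹' {ζ}).Nonempty)
    (hconn : ∀ ζ ∈ R, IsPreconnected (f ⁻¹' {ζ})) :
    Nat.card (ConnectedComponents X) = Nat.card R := by
  have hfib_open : ∀ ζ : ℂ, IsOpen (f ⁻¹' {ζ}) := by
    intro ζ
    have hcl : IsClosed (R \ {ζ}) := (hR.subset diff_subset).isClosed
    have : f ⁻¹' {ζ} = f ⁻¹' (R \ {ζ})ᶜ := by
      ext x
      simp only [mem_preimage, mem_singleton_iff, mem_compl_iff, mem_diff, not_and, not_not]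
      have := hmem x
      tauto
    rw [this]
    exact hcl.isOpen_compl.preimage hf
  have hlc : IsLocallyConstant f := by
    intro s
    have : f ⁻¹' s = ⋃ ζ ∈ s, f ⁻¹' {ζ} := by
      ext x; simp
    rw [this]
    exact isOpen_biUnion fun ζ _ => hfib_open ζ
  let g : ConnectedComponents X → R := Quotient.lift (fun x => (⟨f x, hmem x⟩ : R))
    (by
      intro a b hab
      have hb : b ∈ connectedComponent a := by
        rw [show connectedComponent a = connectedComponent b from hab]
        exact mem_connectedComponent
      exact Subtype.ext
        (hlc.apply_eq_of_isPreconnected isPreconnected_connectedComponent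
          mem_connectedComponent hb))
  have hbij : Function.Bijective g := by
    constructor
    · rintro ⟨a⟩ ⟨b⟩ hab
      have hfab : f a = f b := Subtype.ext_iff.mp hab
      have hmemR := hmem a
      have hsub := (hconn (f a) hmemR).subset_connectedComponent
        (show a ∈ f ⁻¹' {f a} from rfl)
      have hb : b ∈ connectedComponent a := hsub (by simp [mem_preimage, hfab.symm])
      exact Quotient.sound (connectedComponent_eq hb)
    · rintro ⟨ζ, hζ⟩
      obtain ⟨x, hx⟩ := hne ζ hζ
      exact ⟨Quotient.mk'' x, Subtype.ext hx⟩
  exact Nat.card_eq_of_bijective g hbij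

open Complex Set

/-- For `p, q ≥ 1` and `ε, δ > 0`, the fiber of
`θ(u,v) = u^p v^q / |u^p v^q|` on `{(u,v) : |v| = ε, 0 < |u| ≤ δ}` over any
point of the unit circle has exactly `gcd(p,q)` connected components. -/
theorem fiber_components_gcd
    (p q : ℕ) (hp : 1 ≤ p) (hq : 1 ≤ q) (ε δ : ℝ) (hε : 0 < ε) (hδ : 0 < δ)
    (z : ℂ) (hz : z ∈ Metric.sphere (0 : ℂ) 1) :
    Nat.card (ConnectedComponents
      {w : ℂ × ℂ // ‖w.2‖ = ε ∧ 0 < ‖w.1‖ ∧ ‖w.1‖ ≤ δ ∧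
        w.1 ^ p * w.2 ^ q / (‖w.1 ^ p * w.2 ^ q‖ : ℂ) = z})
      = Nat.gcd p q := by
  classical
  have hzabs : ‖z‖ = 1 := by
    have := mem_sphere_zero_iff_norm.mp hz
    simpa using this
  have hz0 : z ≠ 0 := by
    intro h; rw [h] at hzabs; simp at hzabs
  set d := p.gcd q with hdd
  have hd0 : 0 < d := Nat.gcd_pos_of_pos_left q (by omega)
  set p' := p / d with hp'def
  set q' := q / d with hq'def
  have hdp : d * p' = p := Nat.mul_div_cancel' (Nat.gcd_dvd_left p q)
  have hdq : d * q' = q := Nat.mul_div_cancel' (Nat.gcd_dvd_right p q)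
  have hcop : Nat.Coprime p' q' := Nat.coprime_div_gcd_div_gcd hd0
  set s : ℤ := Nat.gcdA p' q' with hsdef
  set t : ℤ := Nat.gcdB p' q' with htdef
  have hbez : (p' : ℤ) * s + (q' : ℤ) * t = 1 := by
    have h := Nat.gcd_eq_gcd_ab p' q'
    rw [Nat.Coprime] at hcop
    rw [hcop] at h
    push_cast at h
    linarith
  set g : ℂ × ℂ → ℂ := fun w =>
    (w.1 ^ p' * w.2 ^ q') / ((‖w.1‖ ^ p' * ε ^ q' : ℝ) : ℂ) with hgdef
  set F : Set (ℂ × ℂ) := {w | ‖w.2‖ = ε ∧ 0 < ‖w.1‖ ∧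
      ‖w.1‖ ≤ δ ∧
      w.1 ^ p * w.2 ^ q / (‖w.1 ^ p * w.2 ^ q‖ : ℂ) = z} with hFdef
  set R : Set ℂ := {ζ : ℂ | ζ ^ d = z} with hRdef
  -- key computation
  have key : ∀ u v : ℂ, ‖v‖ = ε → 0 < ‖u‖ →
      u ^ p * v ^ q / (‖u ^ p * v ^ q‖ : ℂ) = (g (u, v)) ^ d := by
    intro u v hv hu
    have h1 : ‖u ^ p * v ^ q‖ = ‖u‖ ^ p * ε ^ q := by
      rw [norm_mul, norm_pow, norm_pow, hv]
    rw [h1, hgdef]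
    simp only
    rw [div_pow, mul_pow, ← pow_mul, ← pow_mul,
      show p' * d = p by rw [Nat.mul_comm]; exact hdp, show q' * d = q by rw [Nat.mul_comm]; exact hdq]
    push_cast
    rw [mul_pow, ← pow_mul, ← pow_mul,
      show p' * d = p by rw [Nat.mul_comm]; exact hdp, show q' * d = q by rw [Nat.mul_comm]; exact hdq]
  have hRfin : R.Finite := by
    have : R = ↑(Polynomial.nthRoots d z).toFinset := by
      ext x
      simp [hRdef, Polynomial.mem_nthRoots hd0]
    rw [this]
    exact (Polynomial.nthRoots d z).toFinset.finite_toSet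
  have hζfacts : ∀ ζ ∈ R, ζ ≠ 0 ∧ ‖ζ‖ = 1 := by
    intro ζ hζ
    have hζd : ζ ^ d = z := hζ
    have h0 : ζ ≠ 0 := by
      intro h; rw [h, zero_pow hd0.ne'] at hζd; exact hz0 hζd.symm
    have habs : ‖ζ‖ ^ d = 1 := by rw [← norm_pow, hζd, hzabs]
    refine ⟨h0, ?_⟩
    rcases lt_trichotomy (‖ζ‖) 1 with h | h | h
    · have := pow_lt_one₀ (norm_nonneg ζ) h hd0.ne'
      rw [habs] at this; linarith
    · exact h
    · have := one_lt_pow₀ h hd0.ne'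
      rw [habs] at this; linarith
  have hexpand : ∀ ζ : ℂ, ζ ≠ 0 → ∀ E : ℂ, E ≠ 0 →
      (ζ ^ s * E ^ (q' : ℤ)) ^ p' * (ζ ^ t * E ^ (-(p' : ℤ))) ^ q' = ζ := by
    intro ζ hζ0 E hE0
    rw [mul_pow, mul_pow, ← zpow_natCast (ζ ^ s) p', ← zpow_natCast (E ^ (q' : ℤ)) p',
      ← zpow_natCast (ζ ^ t) q', ← zpow_natCast (E ^ (-(p' : ℤ))) q',
      ← zpow_mul, ← zpow_mul, ← zpow_mul, ← zpow_mul,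
      mul_mul_mul_comm, ← zpow_add₀ hζ0, ← zpow_add₀ hE0,
      show s * (p' : ℤ) + t * (q' : ℤ) = 1 by linarith,
      show (q' : ℤ) * (p' : ℤ) + -(p' : ℤ) * (q' : ℤ) = 0 by ring,
      zpow_one, zpow_zero, mul_one]
  -- path-connectedness of each fiber piece
  have main : ∀ ζ ∈ R, IsPathConnected (F ∩ g ⁻¹' {ζ}) := by
    intro ζ hζR
    obtain ⟨hζ0, hζa⟩ := hζfacts ζ hζR
    have hζd : ζ ^ d = z := hζR
    have hΨc : Continuous (fun rθ : ℝ × ℝ =>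
        ((↑rθ.1 * (ζ ^ s * Complex.exp (↑rθ.2 * Complex.I) ^ (q' : ℤ)),
          ↑ε * (ζ ^ t * Complex.exp (↑rθ.2 * Complex.I) ^ (-(p' : ℤ)))) : ℂ × ℂ)) := by
      have hE : Continuous (fun rθ : ℝ × ℝ => Complex.exp (↑rθ.2 * Complex.I)) :=
        Complex.continuous_exp.comp ((Complex.continuous_ofReal.comp continuous_snd).mul
          continuous_const)
      refine Continuous.prodMk ?_ ?_
      · exact (Complex.continuous_ofReal.comp continuous_fst).mul
          (continuous_const.mul (hE.zpow₀ _ fun a => Or.inl (Complex.exp_ne_zero _)))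
      · exact continuous_const.mul
          (continuous_const.mul (hE.zpow₀ _ fun a => Or.inl (Complex.exp_ne_zero _)))
    have hnumAB : ∀ E : ℂ, E ≠ 0 → ∀ r : ℝ,
        (↑r * (ζ ^ s * E ^ (q' : ℤ))) ^ p' * (↑ε * (ζ ^ t * E ^ (-(p' : ℤ)))) ^ q'
          = ((r : ℂ) ^ p' * (ε : ℂ) ^ q') * ζ := by
      intro E hE0 r
      rw [mul_pow ((r : ℂ)) (ζ ^ s * E ^ (q' : ℤ)) p',
        mul_pow ((ε : ℂ)) (ζ ^ t * E ^ (-(p' : ℤ))) q',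
        mul_mul_mul_comm, hexpand ζ hζ0 E hE0]
    have himage : F ∩ g ⁻¹' {ζ} =
        (fun rθ : ℝ × ℝ =>
          ((↑rθ.1 * (ζ ^ s * Complex.exp (↑rθ.2 * Complex.I) ^ (q' : ℤ)),
            ↑ε * (ζ ^ t * Complex.exp (↑rθ.2 * Complex.I) ^ (-(p' : ℤ)))) : ℂ × ℂ)) ''
          (Set.Ioc 0 δ ×ˢ (Set.univ : Set ℝ)) := by
      apply Set.Subset.antisymm
      · rintro ⟨u, v⟩ ⟨⟨hv, hu0, huδ, huvz⟩, hguv⟩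
        simp only [mem_preimage, mem_singleton_iff] at hguv
        have hu0' : u ≠ 0 := by
          intro h; rw [h] at hu0; simp at hu0
        have hA0 : ((‖u‖ : ℂ) * ζ ^ s) ≠ 0 :=
          mul_ne_zero (by exact_mod_cast hu0.ne') (zpow_ne_zero _ hζ0)
        have hB0 : ((ε : ℂ) * ζ ^ t) ≠ 0 :=
          mul_ne_zero (by exact_mod_cast hε.ne') (zpow_ne_zero _ hζ0)
        set X : ℂ := u / ((‖u‖ : ℂ) * ζ ^ s) with hXdef
        set Y : ℂ := v / ((ε : ℂ) * ζ ^ t) with hYdef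
        have hX0 : X ≠ 0 := div_ne_zero hu0' hA0
        have hv0 : v ≠ 0 := by
          intro h; rw [h] at hv; simp at hv; linarith
        have hY0 : Y ≠ 0 := div_ne_zero hv0 hB0
        have habsX : ‖X‖ = 1 := by
          rw [hXdef, norm_div, norm_mul, norm_zpow, hζa, one_zpow, mul_one,
            Complex.norm_of_nonneg hu0.le, div_self hu0.ne']
        have habsY : ‖Y‖ = 1 := by
          rw [hYdef, norm_div, norm_mul, norm_zpow, hζa, one_zpow, mul_one,
            Complex.norm_of_nonneg hε.le, hv, div_self hε.ne']
        have hden : ((‖u‖ ^ p' * ε ^ q' : ℝ) : ℂ) ≠ 0 := by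
          rw [Complex.ofReal_ne_zero]
          positivity
        have huveq : u ^ p' * v ^ q' = ζ * ((‖u‖ ^ p' * ε ^ q' : ℝ) : ℂ) := by
          rw [hgdef] at hguv
          exact (div_eq_iff hden).mp hguv
        have hAB : ((‖u‖ : ℂ) * ζ ^ s) ^ p' * ((ε : ℂ) * ζ ^ t) ^ q'
            = ((‖u‖ : ℂ) ^ p' * (ε : ℂ) ^ q') * ζ := by
          have h := hexpand ζ hζ0 1 one_ne_zero
          simp only [one_zpow, mul_one] at h
          rw [mul_pow, mul_pow, mul_mul_mul_comm, h]
        have hXY : X ^ (p' : ℤ) * Y ^ (q' : ℤ) = 1 := by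
          rw [zpow_natCast, zpow_natCast, hXdef, hYdef, div_pow, div_pow,
            div_mul_div_comm, huveq, hAB]
          push_cast
          rw [div_eq_one_iff_eq]
          · ring
          · exact mul_ne_zero (mul_ne_zero (pow_ne_zero _ (by exact_mod_cast hu0.ne'))
              (pow_ne_zero _ (by exact_mod_cast hε.ne'))) hζ0
        set ω : ℂ := X ^ t * Y ^ (-s) with hωdef
        have hω0 : ω ≠ 0 := mul_ne_zero (zpow_ne_zero _ hX0) (zpow_ne_zero _ hY0)
        have hωabs : ‖ω‖ = 1 := by
          rw [hωdef, norm_mul, norm_zpow, norm_zpow, habsX, habsY, one_zpow, one_zpow,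
            mul_one]
        have hωX : ω ^ (q' : ℤ) = X := by
          have h1 : ω ^ (q' : ℤ) = X ^ (1 + (p' : ℤ) * (-s)) * Y ^ ((q' : ℤ) * (-s)) := by
            rw [hωdef, mul_zpow, ← zpow_mul, ← zpow_mul]
            congr 1
            · congr 1; linear_combination hbez
            · congr 1; ring
          rw [h1, zpow_add₀ hX0, zpow_one, zpow_mul, zpow_mul, mul_assoc,
            ← mul_zpow, hXY, one_zpow, mul_one]
        have hωY : ω ^ (-(p' : ℤ)) = Y := by
          have h1 : ω ^ (-(p' : ℤ)) = X ^ ((p' : ℤ) * (-t)) * Y ^ (1 + (q' : ℤ) * (-t)) := by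
            rw [hωdef, mul_zpow, ← zpow_mul, ← zpow_mul]
            congr 1
            · congr 1; ring
            · congr 1; linear_combination hbez
          rw [h1, zpow_add₀ hY0, zpow_one, zpow_mul, zpow_mul, mul_left_comm,
            ← mul_zpow, hXY, one_zpow, mul_one]
        have hωexp : Complex.exp (↑(Complex.arg ω) * Complex.I) = ω := by
          have h := Complex.norm_mul_exp_arg_mul_I ω
          rw [hωabs] at h
          simpa using h
        refine ⟨(‖u‖, Complex.arg ω), ⟨⟨hu0, huδ⟩, trivial⟩, ?_⟩
        simp only
        rw [hωexp, hωX, hωY]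
        refine Prod.ext ?_ ?_
        · show (‖u‖ : ℂ) * (ζ ^ s * X) = u
          rw [hXdef, ← mul_assoc, mul_comm ((‖u‖ : ℂ) * ζ ^ s),
            div_mul_cancel₀ _ hA0]
        · show (ε : ℂ) * (ζ ^ t * Y) = v
          rw [hYdef, ← mul_assoc, mul_comm ((ε : ℂ) * ζ ^ t),
            div_mul_cancel₀ _ hB0]
      · rintro w ⟨⟨r, θ⟩, ⟨⟨hr0, hrδ⟩, -⟩, rfl⟩
        simp only
        set E : ℂ := Complex.exp (↑θ * Complex.I) with hEdef
        have hE1 : ‖E‖ = 1 := Complex.norm_exp_ofReal_mul_I θ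
        have hE0 : E ≠ 0 := Complex.exp_ne_zero _
        have habsu : ‖(r : ℂ) * (ζ ^ s * E ^ (q' : ℤ))‖ = r := by
          rw [norm_mul, norm_mul, norm_zpow, norm_zpow, hζa, hE1, one_zpow, one_zpow,
            Complex.norm_of_nonneg hr0.le, mul_one, mul_one]
        have habsv : ‖(ε : ℂ) * (ζ ^ t * E ^ (-(p' : ℤ)))‖ = ε := by
          rw [norm_mul, norm_mul, norm_zpow, norm_zpow, hζa, hE1, one_zpow, one_zpow,
            Complex.norm_of_nonneg hε.le, mul_one, mul_one]
        have hgval : g ((r : ℂ) * (ζ ^ s * E ^ (q' : ℤ)),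
            (ε : ℂ) * (ζ ^ t * E ^ (-(p' : ℤ)))) = ζ := by
          rw [hgdef]
          simp only
          rw [hnumAB E hE0 r, habsu]
          push_cast
          rw [mul_comm _ ζ, mul_div_assoc, div_self, mul_one]
          exact mul_ne_zero (pow_ne_zero _ (by exact_mod_cast hr0.ne'))
            (pow_ne_zero _ (by exact_mod_cast hε.ne'))
        constructor
        · refine ⟨habsv, ?_, ?_, ?_⟩
          · rw [habsu]; exact hr0
          · rw [habsu]; exact hrδ
          · rw [key _ _ habsv (by rw [habsu]; exact hr0), hgval, hζd]
        · simpa [mem_preimage] using hgval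
    rw [himage]
    have hne : (Set.Ioc 0 δ ×ˢ (Set.univ : Set ℝ)).Nonempty :=
      ⟨(δ, 0), by simp [Set.mem_prod, hδ]⟩
    exact (((convex_Ioc 0 δ).prod convex_univ).isPathConnected hne).image hΨc
  -- assemble
  show Nat.card (ConnectedComponents ↥F) = d
  have hfc : Continuous (fun x : ↥F => g x.1) := by
    rw [hgdef]
    apply Continuous.div
    · fun_prop
    · apply Complex.continuous_ofReal.comp
      apply Continuous.mul
      · exact (continuous_norm.comp (continuous_fst.comp continuous_subtype_val)).pow _
      · exact continuous_const
    · intro x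
      rw [Complex.ofReal_ne_zero]
      have h1 : 0 < ‖(x.1).1‖ := x.2.2.1
      positivity
  have hmemf : ∀ x : ↥F, g x.1 ∈ R := by
    intro x
    show g x.1 ^ d = z
    have h := key x.1.1 x.1.2 x.2.1 x.2.2.1
    rw [show (x.1.1, x.1.2) = x.1 from rfl] at h
    rw [← h]
    exact x.2.2.2.2
  have hnef : ∀ ζ ∈ R, ((fun x : ↥F => g x.1) ⁻¹' {ζ}).Nonempty := by
    intro ζ hζ
    obtain ⟨w, hw, -⟩ := main ζ hζ
    exact ⟨⟨w, hw.1⟩, hw.2⟩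
  have hconnf : ∀ ζ ∈ R, IsPreconnected ((fun x : ↥F => g x.1) ⁻¹' {ζ}) := by
    intro ζ hζ
    have h1 : (Subtype.val '' ((fun x : ↥F => g x.1) ⁻¹' {ζ})) = F ∩ g ⁻¹' {ζ} := by
      rw [show ((fun x : ↥F => g x.1) ⁻¹' {ζ}) = (Subtype.val ⁻¹' (g ⁻¹' {ζ}) : Set ↥F)
        from rfl, Subtype.image_preimage_coe]
    exact Topology.IsInducing.subtypeVal.isPreconnected_image.mp
      (h1 ▸ (main ζ hζ).isConnected.isPreconnected)
  rw [card_components_aux _ R hRfin hfc hmemf hnef hconnf]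
  exact card_roots_aux d hd0 z hz0
end

section
/- For f(x,y) = x^p y^q (p, q ≥ 1 coprime), the map f/|f| : S³_R \ f⁻¹(0) → S¹ is a locally trivial fibration whose fibers are connected. -/
noncomputable section MilnorXpyqAux

open Complex

/-- The domain: sphere of radius `R` minus the zero set of `x^p y^q`. -/
abbrev MilE (p q : ℕ) (R : ℝ) : Type :=
  {w : ℂ × ℂ // ‖w.1‖ ^ 2 + ‖w.2‖ ^ 2 = R ^ 2 ∧ w.1 ^ p * w.2 ^ q ≠ 0}

lemma circ_coe_zpow (z : Circle) (n : ℤ) : ((z ^ n : Circle) : ℂ) = (z : ℂ) ^ n :=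
  Circle.coeHom.map_zpow' Circle.coe_inv z n

lemma circ_coe_pow (z : Circle) (n : ℕ) : ((z ^ n : Circle) : ℂ) = (z : ℂ) ^ n :=
  map_pow Circle.coeHom z n

/-- The circle action on `MilE`: `z • (w₁, w₂) = (z^a w₁, z^b w₂)`. -/
def milAct (p q : ℕ) (R : ℝ) (a b : ℤ) (z : Circle) (x : MilE p q R) : MilE p q R :=
  ⟨(((z ^ a : Circle) : ℂ) * x.1.1, ((z ^ b : Circle) : ℂ) * x.1.2), by
    constructor
    · simpa [norm_mul, Circle.norm_coe] using x.2.1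
    · have h1 : x.1.1 ^ p ≠ 0 := fun h => x.2.2 (by rw [h, zero_mul])
      have h2 : x.1.2 ^ q ≠ 0 := fun h => x.2.2 (by rw [h, mul_zero])
      rw [mul_pow, mul_pow]
      exact mul_ne_zero (mul_ne_zero (pow_ne_zero _ (Circle.coe_ne_zero _)) h1)
        (mul_ne_zero (pow_ne_zero _ (Circle.coe_ne_zero _)) h2)⟩

lemma milAct_fval (p q : ℕ) (R : ℝ) (a b : ℤ) (hab : a * p + b * q = 1)
    (z : Circle) (x : MilE p q R) :
    (milAct p q R a b z x).1.1 ^ p * (milAct p q R a b z x).1.2 ^ q =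
      (z : ℂ) * (x.1.1 ^ p * x.1.2 ^ q) := by
  have hcirc : ((z ^ a) ^ p * (z ^ b) ^ q : Circle) = z := by
    rw [← zpow_natCast (z ^ a) p, ← zpow_natCast (z ^ b) q, ← zpow_mul, ← zpow_mul,
      ← zpow_add, hab, zpow_one]
  have hc : ((z ^ a : Circle) : ℂ) ^ p * ((z ^ b : Circle) : ℂ) ^ q = (z : ℂ) := by
    rw [← circ_coe_pow, ← circ_coe_pow, ← Circle.coe_mul, hcirc]
  show (((z ^ a : Circle) : ℂ) * x.1.1) ^ p * (((z ^ b : Circle) : ℂ) * x.1.2) ^ q = _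
  rw [mul_pow, mul_pow]
  calc ((z ^ a : Circle) : ℂ) ^ p * x.1.1 ^ p * (((z ^ b : Circle) : ℂ) ^ q * x.1.2 ^ q)
      = (((z ^ a : Circle) : ℂ) ^ p * ((z ^ b : Circle) : ℂ) ^ q) * (x.1.1 ^ p * x.1.2 ^ q) := by
        ring
    _ = _ := by rw [hc]

lemma milAct_mul (p q : ℕ) (R : ℝ) (a b : ℤ) (z w : Circle) (x : MilE p q R) :
    milAct p q R a b z (milAct p q R a b w x) = milAct p q R a b (z * w) x := by
  apply Subtype.ext
  show ((((z ^ a : Circle) : ℂ) * (((w ^ a : Circle) : ℂ) * x.1.1)),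
    (((z ^ b : Circle) : ℂ) * (((w ^ b : Circle) : ℂ) * x.1.2))) = _
  rw [Prod.ext_iff]
  constructor
  · show _ = (((z * w) ^ a : Circle) : ℂ) * x.1.1
    rw [mul_zpow, Circle.coe_mul, mul_assoc]
  · show _ = (((z * w) ^ b : Circle) : ℂ) * x.1.2
    rw [mul_zpow, Circle.coe_mul, mul_assoc]

lemma milAct_one (p q : ℕ) (R : ℝ) (a b : ℤ) (x : MilE p q R) :
    milAct p q R a b 1 x = x := by
  apply Subtype.ext
  show ((((1 : Circle) ^ a : Circle) : ℂ) * x.1.1, (((1 : Circle) ^ b : Circle) : ℂ) * x.1.2) = _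
  rw [one_zpow, one_zpow, Circle.coe_one, one_mul, one_mul]

lemma milAct_inv_cancel (p q : ℕ) (R : ℝ) (a b : ℤ) (z : Circle) (x : MilE p q R) :
    milAct p q R a b z (milAct p q R a b z⁻¹ x) = x := by
  rw [milAct_mul, mul_inv_cancel, milAct_one]

lemma continuous_milAct (p q : ℕ) (R : ℝ) (a b : ℤ) :
    Continuous (fun zx : Circle × MilE p q R => milAct p q R a b zx.1 zx.2) := by
  apply Continuous.subtype_mk
  apply Continuous.prodMk
  · exact ((continuous_subtype_val.comp
      ((continuous_zpow a : Continuous fun z : Circle => z ^ a).comp continuous_fst)).mul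
      (continuous_fst.comp (continuous_subtype_val.comp continuous_snd)))
  · exact ((continuous_subtype_val.comp
      ((continuous_zpow b : Continuous fun z : Circle => z ^ b).comp continuous_fst)).mul
      (continuous_snd.comp (continuous_subtype_val.comp continuous_snd)))

lemma circ_zpow_combo (p q : ℕ) (a b : ℤ) (hab : a * p + b * q = 1) (z : Circle) :
    ((z ^ a) ^ p * (z ^ b) ^ q : Circle) = z := by
  rw [← zpow_natCast (z ^ a) p, ← zpow_natCast (z ^ b) q, ← zpow_mul, ← zpow_mul,
    ← zpow_add, hab, zpow_one]

lemma circ_pow_combo (p q : ℕ) (a b : ℤ) (hab : a * p + b * q = 1) (z : Circle) :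
    ((z ^ a : Circle) : ℂ) ^ p * ((z ^ b : Circle) : ℂ) ^ q = z := by
  rw [← circ_coe_pow, ← circ_coe_pow, ← Circle.coe_mul, circ_zpow_combo p q a b hab]

/-- Parametrization of the fiber of the Milnor fibration over `z`. -/
def milG (p q : ℕ) (R : ℝ) (a b : ℤ) (z : Circle) (hR : 0 < R)
    (rt : ↥(Set.Ioo (0 : ℝ) R) × ℝ) : MilE p q R :=
  ⟨(((rt.1.1 : ℝ) : ℂ) * ((z ^ a : Circle) : ℂ) *
      Complex.exp (((2 * Real.pi * q * rt.2 : ℝ) : ℂ) * Complex.I),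
    ((Real.sqrt (R ^ 2 - rt.1.1 ^ 2) : ℝ) : ℂ) * ((z ^ b : Circle) : ℂ) *
      Complex.exp (((-(2 * Real.pi * p * rt.2) : ℝ) : ℂ) * Complex.I)), by
    obtain ⟨⟨r, hr0, hrR⟩, t⟩ := rt
    have hs0 : (0 : ℝ) < Real.sqrt (R ^ 2 - r ^ 2) :=
      Real.sqrt_pos.2 (by nlinarith)
    have hs2 : Real.sqrt (R ^ 2 - r ^ 2) ^ 2 = R ^ 2 - r ^ 2 :=
      Real.sq_sqrt (by nlinarith)
    constructor
    · simp only [norm_mul, Complex.norm_real, Real.norm_eq_abs, Complex.norm_exp_ofReal_mul_I,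
        Circle.norm_coe, mul_one, abs_of_pos hr0, abs_of_pos hs0]
      rw [hs2]; ring
    · exact mul_ne_zero
        (pow_ne_zero _ (mul_ne_zero (mul_ne_zero
          (Complex.ofReal_ne_zero.2 hr0.ne') (Circle.coe_ne_zero _)) (Complex.exp_ne_zero _)))
        (pow_ne_zero _ (mul_ne_zero (mul_ne_zero
          (Complex.ofReal_ne_zero.2 hs0.ne') (Circle.coe_ne_zero _)) (Complex.exp_ne_zero _)))⟩

lemma milG_fval (p q : ℕ) (R : ℝ) (a b : ℤ) (hab : a * p + b * q = 1) (z : Circle)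
    (hR : 0 < R) (rt : ↥(Set.Ioo (0 : ℝ) R) × ℝ) :
    (milG p q R a b z hR rt).1.1 ^ p * (milG p q R a b z hR rt).1.2 ^ q =
      ((rt.1.1 ^ p * Real.sqrt (R ^ 2 - rt.1.1 ^ 2) ^ q : ℝ) : ℂ) * z := by
  have hexp : Complex.exp (((2 * Real.pi * q * rt.2 : ℝ) : ℂ) * Complex.I) ^ p *
      Complex.exp (((-(2 * Real.pi * p * rt.2) : ℝ) : ℂ) * Complex.I) ^ q = 1 := by
    rw [← Complex.exp_nat_mul, ← Complex.exp_nat_mul, ← Complex.exp_add,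
      show (p : ℂ) * (((2 * Real.pi * q * rt.2 : ℝ) : ℂ) * Complex.I) +
        (q : ℂ) * (((-(2 * Real.pi * p * rt.2) : ℝ) : ℂ) * Complex.I) = 0 by
          push_cast; ring, Complex.exp_zero]
  show (((rt.1.1 : ℝ) : ℂ) * _ * _) ^ p * (_ * _ * _) ^ q = _
  rw [mul_pow, mul_pow, mul_pow, mul_pow]
  calc _ = (((rt.1.1 : ℝ) : ℂ) ^ p * ((Real.sqrt (R ^ 2 - rt.1.1 ^ 2) : ℝ) : ℂ) ^ q) *
        ((((z ^ a : Circle) : ℂ)) ^ p * (((z ^ b : Circle) : ℂ)) ^ q) *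
        (Complex.exp (((2 * Real.pi * q * rt.2 : ℝ) : ℂ) * Complex.I) ^ p *
          Complex.exp (((-(2 * Real.pi * p * rt.2) : ℝ) : ℂ) * Complex.I) ^ q) := by ring
    _ = _ := by rw [circ_pow_combo p q a b hab, hexp, mul_one]; push_cast; ring

lemma continuous_milG (p q : ℕ) (R : ℝ) (a b : ℤ) (z : Circle) (hR : 0 < R) :
    Continuous (milG p q R a b z hR) := by
  apply Continuous.subtype_mk
  fun_prop

variable {p q : ℕ} {R : ℝ} {θ : MilE p q R → ℂ}
  (hθ : ∀ x, θ x = x.1.1 ^ p * x.1.2 ^ q / (‖x.1.1 ^ p * x.1.2 ^ q‖ : ℂ))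

include hθ

lemma milAbsTheta (x : MilE p q R) : ‖θ x‖ = 1 := by
  rw [hθ, norm_div, Complex.norm_real, norm_norm,
    div_self (norm_ne_zero_iff.mpr x.2.2)]

/-- `θ` as a map to the circle. -/
def MilTheta (x : MilE p q R) : Circle :=
  ⟨θ x, mem_sphere_zero_iff_norm.2 (by exact milAbsTheta hθ x)⟩

@[simp] lemma MilTheta_coe (x : MilE p q R) : ((MilTheta hθ x : Circle) : ℂ) = θ x := rfl

lemma milTheta_act (a b : ℤ) (hab : a * p + b * q = 1) (z : Circle) (x : MilE p q R) :
    θ (milAct p q R a b z x) = (z : ℂ) * θ x := by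
  rw [hθ, hθ, milAct_fval p q R a b hab z x, norm_mul, Circle.norm_coe, one_mul,
    mul_div_assoc]

lemma MilTheta_act (a b : ℤ) (hab : a * p + b * q = 1) (z : Circle) (x : MilE p q R) :
    MilTheta hθ (milAct p q R a b z x) = z * MilTheta hθ x :=
  Circle.ext (milTheta_act hθ a b hab z x)

lemma continuous_milTheta : Continuous θ := by
  have : θ = fun x : MilE p q R =>
      x.1.1 ^ p * x.1.2 ^ q / (‖x.1.1 ^ p * x.1.2 ^ q‖ : ℂ) := funext hθ
  rw [this]
  have hnum : Continuous fun x : MilE p q R => x.1.1 ^ p * x.1.2 ^ q :=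
    ((continuous_fst.comp continuous_subtype_val).pow p).mul
      ((continuous_snd.comp continuous_subtype_val).pow q)
  exact hnum.div (Complex.continuous_ofReal.comp (continuous_norm.comp hnum))
    fun x => by
      simpa [Complex.ofReal_ne_zero] using norm_ne_zero_iff.mpr x.2.2

lemma continuous_MilTheta : Continuous (MilTheta hθ) :=
  Continuous.subtype_mk (continuous_milTheta hθ) _

lemma milTheta_act_one (a b : ℤ) (hab : a * p + b * q = 1) (z : Circle) (x : MilE p q R)
    (hx : θ x = 1) : θ (milAct p q R a b z x) = (z : ℂ) := by
  rw [milTheta_act hθ a b hab, hx, mul_one]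

/-- The global trivialization of the Milnor fibration of `x^p y^q`. -/
def milHomeo (a b : ℤ) (hab : a * p + b * q = 1) :
    ↥(θ ⁻¹' (Set.univ ∩ Metric.sphere (0 : ℂ) 1)) ≃ₜ
      ↥(Set.univ ∩ Metric.sphere (0 : ℂ) 1) × ↥(θ ⁻¹' ({1} : Set ℂ)) where
  toFun x := (⟨θ x.1, x.2⟩,
    ⟨milAct p q R a b (MilTheta hθ x.1)⁻¹ x.1, by
      show θ _ ∈ ({1} : Set ℂ)
      rw [Set.mem_singleton_iff, milTheta_act hθ a b hab, Circle.coe_inv, MilTheta_coe,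
        inv_mul_cancel₀]
      intro h
      simpa [h] using milAbsTheta hθ x.1⟩)
  invFun zy := ⟨milAct p q R a b ⟨zy.1.1, zy.1.2.2⟩ zy.2.1, by
    show θ _ ∈ Set.univ ∩ Metric.sphere (0 : ℂ) 1
    exact ⟨trivial, by convert zy.1.2.2 using 1; exact milTheta_act_one hθ a b hab _ _ zy.2.2⟩⟩
  left_inv x := by
    apply Subtype.ext
    have hz : (⟨(⟨θ x.1, x.2⟩ : ↥(Set.univ ∩ Metric.sphere (0 : ℂ) 1)).1,
        (⟨θ x.1, x.2⟩ : ↥(Set.univ ∩ Metric.sphere (0 : ℂ) 1)).2.2⟩ : Circle) =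
        MilTheta hθ x.1 := Circle.ext rfl
    show milAct p q R a b _ (milAct p q R a b (MilTheta hθ x.1)⁻¹ x.1) = x.1
    rw [hz, milAct_inv_cancel]
  right_inv zy := by
    have h1 : θ (milAct p q R a b ⟨zy.1.1, zy.1.2.2⟩ zy.2.1) = zy.1.1 :=
      milTheta_act_one hθ a b hab _ _ zy.2.2
    refine Prod.ext (Subtype.ext h1) (Subtype.ext ?_)
    show milAct p q R a b (MilTheta hθ _)⁻¹ (milAct p q R a b _ zy.2.1) = zy.2.1
    have h2 : MilTheta hθ (milAct p q R a b ⟨zy.1.1, zy.1.2.2⟩ zy.2.1) =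
        (⟨zy.1.1, zy.1.2.2⟩ : Circle) := Circle.ext h1
    rw [h2]
    exact (milAct_mul p q R a b _ _ zy.2.1).trans ((congrArg (fun c => milAct p q R a b c zy.2.1)
      (inv_mul_cancel _)).trans (milAct_one p q R a b zy.2.1))
  continuous_toFun := by
    apply Continuous.prodMk
    · exact Continuous.subtype_mk ((continuous_milTheta hθ).comp continuous_subtype_val) _
    · refine Continuous.subtype_mk ?_ _
      exact (continuous_milAct p q R a b).comp
        ((continuous_inv.comp ((continuous_MilTheta hθ).comp
          continuous_subtype_val)).prodMk continuous_subtype_val)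
  continuous_invFun := by
    refine Continuous.subtype_mk ?_ _
    have hc : Continuous fun zy : ↥(Set.univ ∩ Metric.sphere (0 : ℂ) 1) × ↥(θ ⁻¹' ({1} : Set ℂ)) =>
        ((⟨zy.1.1, zy.1.2.2⟩ : Circle), zy.2.1) := by
      fun_prop
    exact (continuous_milAct p q R a b).comp hc

lemma milTheta_milG (a b : ℤ) (hab : a * p + b * q = 1) (z : Circle) (hR : 0 < R)
    (rt : ↥(Set.Ioo (0 : ℝ) R) × ℝ) :
    θ (milG p q R a b z hR rt) = (z : ℂ) := by
  obtain ⟨⟨r, hr0, hrR⟩, t⟩ := rt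
  have hs0 : (0 : ℝ) < Real.sqrt (R ^ 2 - r ^ 2) := Real.sqrt_pos.2 (by nlinarith)
  have hK : (0 : ℝ) < r ^ p * Real.sqrt (R ^ 2 - r ^ 2) ^ q := by positivity
  rw [hθ, milG_fval p q R a b hab z hR, norm_mul, Complex.norm_real, Real.norm_eq_abs, Circle.norm_coe,
    mul_one, abs_of_pos hK, mul_comm, mul_div_assoc,
    div_self (Complex.ofReal_ne_zero.2 hK.ne'), mul_one]

lemma milFiber_eq (hp : 1 ≤ p) (hq : 1 ≤ q) (a b : ℤ) (hab : a * p + b * q = 1)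
    (z : Circle) (hR : 0 < R) :
    θ ⁻¹' {(z : ℂ)} = Set.range (milG p q R a b z hR) := by
  ext x
  simp only [Set.mem_preimage, Set.mem_singleton_iff, Set.mem_range]
  constructor
  · intro hx
    -- notation
    set w1 := x.1.1 with hw1def
    set w2 := x.1.2 with hw2def
    have hw1p : w1 ^ p ≠ 0 := fun h => x.2.2 (by rw [← hw1def, ← hw2def, h, zero_mul])
    have hw2q : w2 ^ q ≠ 0 := fun h => x.2.2 (by rw [← hw1def, ← hw2def, h, mul_zero])
    have hw1 : w1 ≠ 0 := fun h => hw1p (by rw [h]; exact zero_pow (by omega))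
    have hw2 : w2 ≠ 0 := fun h => hw2q (by rw [h]; exact zero_pow (by omega))
    set r := ‖w1‖ with hrdef
    set s := ‖w2‖ with hsdef
    have hr0 : 0 < r := norm_pos_iff.mpr hw1
    have hs0 : 0 < s := norm_pos_iff.mpr hw2
    have hrs : r ^ 2 + s ^ 2 = R ^ 2 := x.2.1
    have hrR : r < R := by nlinarith
    have hsqrt : Real.sqrt (R ^ 2 - r ^ 2) = s := by
      rw [show R ^ 2 - r ^ 2 = s ^ 2 by linarith, Real.sqrt_sq hs0.le]
    -- unit parts
    have hu1 : ‖w1 / (r : ℂ)‖ = 1 := by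
      rw [norm_div, Complex.norm_real, Real.norm_eq_abs, abs_of_pos hr0, div_self hr0.ne']
    have hv1 : ‖w2 / (s : ℂ)‖ = 1 := by
      rw [norm_div, Complex.norm_real, Real.norm_eq_abs, abs_of_pos hs0, div_self hs0.ne']
    set uc : Circle := ⟨w1 / (r : ℂ), mem_sphere_zero_iff_norm.2 hu1⟩ with hucdef
    set vc : Circle := ⟨w2 / (s : ℂ), mem_sphere_zero_iff_norm.2 hv1⟩ with hvcdef
    have habs : ‖w1 ^ p * w2 ^ q‖ = r ^ p * s ^ q := by
      rw [norm_mul, norm_pow, norm_pow]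
    have hx' : w1 ^ p * w2 ^ q = (z : ℂ) * ((r ^ p * s ^ q : ℝ) : ℂ) := by
      rw [hθ] at hx
      rw [← hw1def, ← hw2def, habs,
        div_eq_iff (Complex.ofReal_ne_zero.2 (by positivity : (0:ℝ) < r ^ p * s ^ q).ne')] at hx
      exact hx
    have hKne : ((r : ℂ)) ^ p * ((s : ℂ)) ^ q ≠ 0 :=
      mul_ne_zero (pow_ne_zero _ (Complex.ofReal_ne_zero.2 hr0.ne'))
        (pow_ne_zero _ (Complex.ofReal_ne_zero.2 hs0.ne'))
    have huv : uc ^ p * vc ^ q = z := by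
      apply Circle.ext
      rw [Circle.coe_mul, circ_coe_pow, circ_coe_pow]
      show (w1 / (r : ℂ)) ^ p * (w2 / (s : ℂ)) ^ q = (z : ℂ)
      rw [div_pow, div_pow, div_mul_div_comm, hx']
      push_cast
      rw [mul_div_assoc, div_self hKne, mul_one]
    -- the kernel element
    set u'c : Circle := uc / z ^ a with hu'def
    set v'c : Circle := vc / z ^ b with hv'def
    have h1 : u'c ^ p * v'c ^ q = 1 := by
      rw [hu'def, hv'def, div_pow, div_pow, div_mul_div_comm, huv,
        circ_zpow_combo p q a b hab, div_self']
    set α := Complex.arg (u'c : ℂ) with hαdef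
    set β := Complex.arg (v'c : ℂ) with hβdef
    have hu' : (u'c : ℂ) = Complex.exp ((α : ℂ) * Complex.I) := by
      conv_lhs => rw [← Complex.norm_mul_exp_arg_mul_I (u'c : ℂ)]
      rw [Circle.norm_coe, Complex.ofReal_one, one_mul]
    have hv' : (v'c : ℂ) = Complex.exp ((β : ℂ) * Complex.I) := by
      conv_lhs => rw [← Complex.norm_mul_exp_arg_mul_I (v'c : ℂ)]
      rw [Circle.norm_coe, Complex.ofReal_one, one_mul]
    have h2 : Complex.exp ((p : ℂ) * ((α : ℂ) * Complex.I) +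
        (q : ℂ) * ((β : ℂ) * Complex.I)) = 1 := by
      have hc := congrArg (fun w : Circle => (w : ℂ)) h1
      simp only [Circle.coe_mul, circ_coe_pow, Circle.coe_one] at hc
      rw [Complex.exp_add, Complex.exp_nat_mul, Complex.exp_nat_mul, ← hu', ← hv']
      exact hc
    obtain ⟨n, hn⟩ := Complex.exp_eq_one_iff.1 h2
    have hreal : (p : ℝ) * α + (q : ℝ) * β = n * (2 * Real.pi) := by
      have hC : (((p : ℝ) * α + (q : ℝ) * β : ℝ) : ℂ) * Complex.I =
          (((n : ℝ) * (2 * Real.pi) : ℝ) : ℂ) * Complex.I := by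
        push_cast
        -- cast normalization
        linear_combination hn
      have := mul_right_cancel₀ Complex.I_ne_zero hC
      exact_mod_cast this
    have hq0 : (q : ℝ) ≠ 0 := Nat.cast_ne_zero.2 (by omega)
    -- the parameter
    refine ⟨(⟨r, hr0, hrR⟩, (α - 2 * Real.pi * n * a) / (2 * Real.pi * (q : ℝ))), ?_⟩
    set t := (α - 2 * Real.pi * n * a) / (2 * Real.pi * (q : ℝ)) with htdef
    have ht1 : 2 * Real.pi * (q : ℝ) * t = α - 2 * Real.pi * n * a := by
      rw [htdef, mul_div_cancel₀]
      exact mul_ne_zero (mul_ne_zero two_ne_zero Real.pi_ne_zero) hq0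
    have ht2 : -(2 * Real.pi * (p : ℝ) * t) = β - 2 * Real.pi * n * b := by
      have hab' : (a : ℝ) * p + (b : ℝ) * q = 1 := by exact_mod_cast hab
      apply mul_left_cancel₀ hq0
      linear_combination (-(p : ℝ)) * ht1 - hreal + (2 * Real.pi * (n : ℝ)) * hab'
    have hE1 : Complex.exp (((2 * Real.pi * (q : ℝ) * t : ℝ) : ℂ) * Complex.I) =
        (u'c : ℂ) := by
      rw [ht1, hu']
      rw [show ((α - 2 * Real.pi * n * a : ℝ) : ℂ) * Complex.I =
        (α : ℂ) * Complex.I - ((n * a : ℤ) : ℂ) * (2 * (Real.pi : ℂ) * Complex.I) by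
          push_cast; ring]
      rw [Complex.exp_sub, Complex.exp_int_mul_two_pi_mul_I, div_one]
    have hE2 : Complex.exp (((-(2 * Real.pi * (p : ℝ) * t) : ℝ) : ℂ) * Complex.I) =
        (v'c : ℂ) := by
      rw [ht2, hv']
      rw [show ((β - 2 * Real.pi * n * b : ℝ) : ℂ) * Complex.I =
        (β : ℂ) * Complex.I - ((n * b : ℤ) : ℂ) * (2 * (Real.pi : ℂ) * Complex.I) by
          push_cast; ring]
      rw [Complex.exp_sub, Complex.exp_int_mul_two_pi_mul_I, div_one]
    -- conclude
    apply Subtype.ext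
    apply Prod.ext
    · show ((r : ℝ) : ℂ) * ((z ^ a : Circle) : ℂ) * _ = w1
      rw [hE1]
      have : ((z ^ a : Circle) : ℂ) * (u'c : ℂ) = (uc : ℂ) := by
        rw [hu'def, Circle.coe_div, mul_div_cancel₀ _ (Circle.coe_ne_zero _)]
      rw [mul_assoc, this]
      show ((r : ℝ) : ℂ) * (w1 / (r : ℂ)) = w1
      rw [mul_div_cancel₀ _ (Complex.ofReal_ne_zero.2 hr0.ne')]
    · show ((Real.sqrt (R ^ 2 - r ^ 2) : ℝ) : ℂ) * ((z ^ b : Circle) : ℂ) * _ = w2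
      rw [hsqrt, hE2]
      have : ((z ^ b : Circle) : ℂ) * (v'c : ℂ) = (vc : ℂ) := by
        rw [hv'def, Circle.coe_div, mul_div_cancel₀ _ (Circle.coe_ne_zero _)]
      rw [mul_assoc, this]
      show ((s : ℝ) : ℂ) * (w2 / (s : ℂ)) = w2
      rw [mul_div_cancel₀ _ (Complex.ofReal_ne_zero.2 hs0.ne')]
  · rintro ⟨rt, rfl⟩
    exact milTheta_milG hθ a b hab z hR rt

end MilnorXpyqAux


/-- For `f(x,y) = x^p y^q` with `gcd(p,q) = 1`, the map `f/|f|` on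
`S³_R \ f⁻¹(0)` is a locally trivial fibration over the unit circle with
connected fibers. -/
theorem milnor_fibration_xpyq
    (p q : ℕ) (hp : 1 ≤ p) (hq : 1 ≤ q) (hpq : Nat.gcd p q = 1)
    (R : ℝ) (hR : 0 < R)
    (θ : {w : ℂ × ℂ // ‖w.1‖ ^ 2 + ‖w.2‖ ^ 2 = R ^ 2 ∧
        w.1 ^ p * w.2 ^ q ≠ 0} → ℂ)
    (hθ : ∀ x, θ x =
      x.1.1 ^ p * x.1.2 ^ q / (‖x.1.1 ^ p * x.1.2 ^ q‖ : ℂ)) :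
    IsLocTrivFibOn θ (Metric.sphere (0 : ℂ) 1) ∧
      ∀ z ∈ Metric.sphere (0 : ℂ) 1, IsConnected (θ ⁻¹' {z}) := by
  have habex : ∃ a b : ℤ, a * p + b * q = 1 := by
    refine ⟨Nat.gcdA p q, Nat.gcdB p q, ?_⟩
    have h := Nat.gcd_eq_gcd_ab p q
    rw [hpq] at h
    push_cast at h ⊢
    linarith
  obtain ⟨a, b, hab⟩ := habex
  constructor
  · intro w _
    exact ⟨Set.univ, isOpen_univ, Set.mem_univ w,
      ↥(θ ⁻¹' ({1} : Set ℂ)), inferInstance, milHomeo hθ a b hab, fun x => rfl⟩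
  · intro z hz
    haveI : ConnectedSpace ↥(Set.Ioo (0 : ℝ) R) :=
      Subtype.connectedSpace (isConnected_Ioo hR)
    have hzz : ({z} : Set ℂ) = {((⟨z, hz⟩ : Circle) : ℂ)} := rfl
    rw [hzz, milFiber_eq hθ hp hq a b hab ⟨z, hz⟩ hR]
    exact isConnected_range (continuous_milG p q R a b _ hR)
end
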